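/- If a zero-mean random vector X in ℝ^d is (σ/√d)-subGaussian, i.e. E exp(⟨v, X⟩) ≤ exp(‖v‖² σ²/(2d)) for all v ∈ ℝ^d, then for every t ≥ 0 one has Pr(‖X‖ ≥ t) ≤ 4^d · exp(−d t²/(8σ²)). -/

import Mathlib

/-!
A maximal `1`-separated subset `N` of the unit sphere of `ℝ^d` is a `1`-net of it, and the balls
of radius `1/2` around its points are disjoint and lie in the ball of radius `3/2`, so
`#N ≤ 3^d ≤ 4^d`. If `u, v` are unit vectors with `‖u - v‖ ≤ 1` then `⟪v, u⟫ ≥ 1/2`, so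
`‖X‖ ≥ t` forces `⟪v, X⟫ ≥ t/2` for some `v ∈ N`. Each `⟪v, X⟫` has a subGaussian MGF with
variance proxy `σ²/d`, so by Chernoff each of these events has probability at most
`exp(-d t²/(8σ²))`; a union bound over `N` concludes.
-/

open MeasureTheory ProbabilityTheory Real
open scoped RealInnerProductSpace

open Metric Module
open scoped ENNReal NNReal

section Packing

variable {E : Type*} [NormedAddCommGroup E] [NormedSpace ℝ E] [FiniteDimensional ℝ E]

lemma Finset.card_mul_pow_le_of_isSeparated {T : Finset E} {ε : ℝ≥0} (hε : ε ≠ 0) {x : E}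
    {r : ℝ} (hr : 0 ≤ r) (hT : (T : Set E) ⊆ closedBall x r)
    (hsep : IsSeparated ε (T : Set E)) :
    T.card * (ε : ℝ) ^ finrank ℝ E ≤ (2 * r + ε) ^ finrank ℝ E := by
  borelize E
  set μ : Measure E := Measure.addHaar
  set d := finrank ℝ E
  have hε₂ : (0 : ℝ) < ε / 2 := by positivity
  have hdisj : (T : Set E).PairwiseDisjoint (ball · (ε / 2)) := fun v hv w hw hvw =>
    ball_disjoint_ball <| by
      have : (ε : ℝ≥0∞) < edist v w := hsep hv hw hvw
      rw [edist_nndist, ENNReal.coe_lt_coe, ← NNReal.coe_lt_coe, coe_nndist] at this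
      linarith
  have hsub : ⋃ v ∈ T, ball v (ε / 2) ⊆ ball x (r + ε / 2) :=
    Set.iUnion₂_subset fun v hv => ball_subset_ball' (by linarith [mem_closedBall.mp (hT hv)])
  have hvol : T.card * μ (ball 0 (ε / 2)) ≤ μ (ball x (r + ε / 2)) := calc
    T.card * μ (ball 0 (ε / 2)) = ∑ v ∈ T, μ (ball v (ε / 2)) := by
      simp [Measure.addHaar_ball_center]
    _ = μ (⋃ v ∈ T, ball v (ε / 2)) :=
      (measure_biUnion_finset hdisj fun _ _ => measurableSet_ball).symm
    _ ≤ μ (ball x (r + ε / 2)) := measure_mono hsub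
  rw [Measure.addHaar_ball_of_pos μ _ hε₂,
    Measure.addHaar_ball_of_pos μ x (r := r + ε / 2) (by positivity), ← mul_assoc,
    ENNReal.mul_le_mul_iff_left (measure_ball_pos μ 0 one_pos).ne' measure_ball_lt_top.ne,
    ← ENNReal.ofReal_natCast, ← ENNReal.ofReal_mul (by positivity),
    ENNReal.ofReal_le_ofReal_iff (by positivity)] at hvol
  calc T.card * (ε : ℝ) ^ d = 2 ^ d * (T.card * (ε / 2) ^ d) := by
        rw [div_pow]; field_simp
    _ ≤ 2 ^ d * (r + ε / 2) ^ d := by gcongr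
    _ = (2 * r + ε) ^ d := by rw [← mul_pow]; ring_nf

lemma Metric.packingNumber_le_of_subset_closedBall {A : Set E} {ε : ℝ≥0} (hε : ε ≠ 0) {x : E}
    {r : ℝ} (hr : 0 ≤ r) (hA : A ⊆ closedBall x r) :
    packingNumber ε A ≤ ⌊((2 * r + ε) / ε) ^ finrank ℝ E⌋₊ := by
  refine iSup₂_le fun C hCA => iSup_le fun hC => ?_
  by_contra! hlt
  obtain ⟨T, hTC, hTcard⟩ := Set.exists_subset_encard_eq (Order.add_one_le_of_lt hlt)
  have hT : T.Finite := Set.finite_of_encard_eq_coe hTcard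
  have hbound := Finset.card_mul_pow_le_of_isSeparated hε hr
    (by simpa using hTC.trans (hCA.trans hA)) (by simpa using hC.subset hTC) (T := hT.toFinset)
  rw [hT.encard_eq_coe_toFinset_card, ← ENat.natCast_one, ← ENat.natCast_add,
    ENat.natCast_inj] at hTcard
  rw [hTcard, ← le_div_iff₀ (by positivity), ← div_pow] at hbound
  exact (Nat.lt_floor_add_one _).not_ge (by exact_mod_cast hbound)

lemma Metric.exists_finset_isCover_sphere :
    ∃ N : Finset E, (N : Set E) ⊆ sphere 0 1 ∧ IsCover 1 (sphere 0 1) (N : Set E) ∧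
      N.card ≤ 3 ^ finrank ℝ E := by
  have hpack : packingNumber 1 (sphere (0 : E) 1) ≤ (3 ^ finrank ℝ E : ℕ) := by
    have h := packingNumber_le_of_subset_closedBall (E := E) one_ne_zero zero_le_one
      (sphere_subset_closedBall (x := 0) (ε := 1))
    rwa [NNReal.coe_one, show ((2 * 1 + 1) / 1 : ℝ) ^ finrank ℝ E = (3 ^ finrank ℝ E : ℕ) by
      norm_num, Nat.floor_natCast] at h
  have hcov := (coveringNumber_le_packingNumber _ _).trans hpack
  have hfin : coveringNumber 1 (sphere (0 : E) 1) ≠ ⊤ := ne_top_of_le_ne_top (by simp) hcov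
  refine ⟨finite_minimalCover.toFinset, by simpa using minimalCover_subset (ε := 1),
    by simpa using isCover_minimalCover hfin, ?_⟩
  rwa [← ENat.natCast_le_natCast, ← Set.Finite.encard_eq_coe_toFinset_card,
    encard_minimalCover hfin]

end Packing

section InnerProduct

variable {F : Type*} [NormedAddCommGroup F] [InnerProductSpace ℝ F]

lemma one_le_two_mul_inner_of_dist_le_one {u v : F} (hu : ‖u‖ = 1) (hv : ‖v‖ = 1)
    (h : dist u v ≤ 1) : 1 ≤ 2 * ⟪v, u⟫ := by
  have hsq := norm_sub_sq_real u v
  rw [hu, hv, ← dist_eq_norm, real_inner_comm] at hsq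
  nlinarith [dist_nonneg (x := u) (y := v)]

lemma Metric.IsCover.exists_norm_le_two_mul_inner {N : Set F} (hN : N ⊆ sphere 0 1)
    (hcover : IsCover 1 (sphere 0 1) N) {x : F} (hx : x ≠ 0) :
    ∃ v ∈ N, ‖x‖ ≤ 2 * ⟪v, x⟫ := by
  have hx' : 0 < ‖x‖ := norm_pos_iff.mpr hx
  have hu : ‖‖x‖⁻¹ • x‖ = 1 := by
    rw [norm_smul, norm_inv, norm_norm, inv_mul_cancel₀ hx'.ne']
  obtain ⟨v, hvN, hdist⟩ := hcover (mem_sphere_zero_iff_norm.mpr hu)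
  have hv : ‖v‖ = 1 := mem_sphere_zero_iff_norm.mp (hN hvN)
  replace hdist : dist (‖x‖⁻¹ • x) v ≤ 1 := by simpa [edist_dist] using hdist
  refine ⟨v, hvN, ?_⟩
  have := one_le_two_mul_inner_of_dist_le_one hu hv hdist
  rw [real_inner_smul_right] at this
  calc ‖x‖ = ‖x‖ * 1 := (mul_one _).symm
    _ ≤ ‖x‖ * (2 * (‖x‖⁻¹ * ⟪v, x⟫)) := by gcongr
    _ = 2 * ⟪v, x⟫ := by field_simp

end InnerProduct

section Probability

variable {Ω F : Type*} [MeasurableSpace Ω] {μ : Measure Ω}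
  [NormedAddCommGroup F] [InnerProductSpace ℝ F] {X : Ω → F}

lemma hasSubgaussianMGF_inner {c : ℝ≥0} (hint : ∀ v, Integrable (fun ω => exp ⟪v, X ω⟫) μ)
    (hmgf : ∀ v, ∫ ω, exp ⟪v, X ω⟫ ∂μ ≤ exp (‖v‖ ^ 2 * c / 2)) (v : F) :
    HasSubgaussianMGF (fun ω => ⟪v, X ω⟫) (‖v‖₊ ^ 2 * c) μ where
  integrable_exp_mul s := by simpa [real_inner_smul_left] using hint (s • v)
  mgf_le s := by
    simpa [mgf, real_inner_smul_left, norm_smul, mul_pow, mul_comm, mul_left_comm, mul_assoc]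
      using hmgf (s • v)

lemma measure_norm_ge_le_card_mul [IsFiniteMeasure μ] {N : Finset F}
    (hN : (N : Set F) ⊆ sphere 0 1) (hcover : IsCover 1 (sphere 0 1) (N : Set F)) {t : ℝ}
    (ht : 0 < t) {b : ℝ} (hb : ∀ v ∈ N, μ.real {ω | t / 2 ≤ ⟪v, X ω⟫} ≤ b) :
    μ {ω | t ≤ ‖X ω‖} ≤ N.card * ENNReal.ofReal b := by
  have hsub : {ω | t ≤ ‖X ω‖} ⊆ ⋃ v ∈ N, {ω | t / 2 ≤ ⟪v, X ω⟫} := by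
    intro ω hω
    have hX : X ω ≠ 0 := norm_pos_iff.mp (ht.trans_le hω)
    obtain ⟨v, hvN, hv⟩ := hcover.exists_norm_le_two_mul_inner hN hX
    exact Set.mem_biUnion hvN (by simp only [Set.mem_ofPred_eq] at hω ⊢; linarith)
  calc μ {ω | t ≤ ‖X ω‖} ≤ ∑ v ∈ N, μ {ω | t / 2 ≤ ⟪v, X ω⟫} :=
        (measure_mono hsub).trans (measure_biUnion_finset_le N _)
    _ ≤ ∑ v ∈ N, ENNReal.ofReal b := Finset.sum_le_sum fun v hv =>
        (ENNReal.le_ofReal_iff_toReal_le (measure_ne_top μ _)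
          (measureReal_nonneg.trans (hb v hv))).mpr (hb v hv)
    _ = N.card * ENNReal.ofReal b := by rw [Finset.sum_const, nsmul_eq_mul]

end Probability

theorem subGaussian_norm_tail_with_covering_general
    (d : ℕ) (Ω : Type) [MeasureSpace Ω] [IsProbabilityMeasure (ℙ : Measure Ω)]
    (X : Ω → EuclideanSpace ℝ (Fin d)) (σ : ℝ)
    (hmgf_int : ∀ v : EuclideanSpace ℝ (Fin d), Integrable (fun ω => Real.exp ⟪v, X ω⟫))
    (hmgf : ∀ v : EuclideanSpace ℝ (Fin d),
      (∫ ω, Real.exp ⟪v, X ω⟫) ≤ Real.exp (‖v‖ ^ 2 * σ ^ 2 / (2 * d))) :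
    ∀ t : ℝ, 0 ≤ t →
      ℙ {ω | t ≤ ‖X ω‖} ≤
        ENNReal.ofReal ((4 : ℝ) ^ d * Real.exp (-(d * t ^ 2) / (8 * σ ^ 2))) := by
  intro t ht
  rcases ht.eq_or_lt with rfl | ht
  · refine prob_le_one.trans ?_
    simp [one_le_pow₀]
  obtain ⟨N, hNsphere, hNcover, hNcard⟩ :=
    exists_finset_isCover_sphere (E := EuclideanSpace ℝ (Fin d))
  rw [finrank_euclideanSpace_fin] at hNcard
  set c : ℝ≥0 := (σ ^ 2 / d).toNNReal
  have hc : (c : ℝ) = σ ^ 2 / d := Real.coe_toNNReal _ (by positivity)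
  have hX : ∀ v ∈ N, HasSubgaussianMGF (fun ω => ⟪v, X ω⟫) c ℙ := fun v hv => by
    have hv1 : ‖v‖₊ = 1 := Subtype.ext (mem_sphere_zero_iff_norm.mp (hNsphere hv))
    simpa [hv1] using hasSubgaussianMGF_inner hmgf_int
      (fun w => (hmgf w).trans_eq (by rw [hc]; ring_nf)) v
  have hexp : -(t / 2) ^ 2 / (2 * c) = -(d * t ^ 2) / (8 * σ ^ 2) := by
    rw [hc, mul_div_assoc', div_div_eq_mul_div]; ring
  calc ℙ {ω | t ≤ ‖X ω‖} ≤ N.card * ENNReal.ofReal (exp (-(t / 2) ^ 2 / (2 * c))) :=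
        measure_norm_ge_le_card_mul hNsphere hNcover ht fun v hv =>
          (hX v hv).measure_ge_le (by positivity)
    _ ≤ 4 ^ d * ENNReal.ofReal (exp (-(d * t ^ 2) / (8 * σ ^ 2))) := by
        rw [hexp]
        gcongr
        exact_mod_cast hNcard.trans (Nat.pow_le_pow_left (by norm_num) d)
    _ = ENNReal.ofReal (4 ^ d * exp (-(d * t ^ 2) / (8 * σ ^ 2))) := by
        rw [ENNReal.ofReal_mul (by positivity), ENNReal.ofReal_pow (by norm_num)]; norm_num

/-- If a zero-mean random vector `X` in `ℝ^d` is `(σ/√d)`-subGaussian, i.e.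
`E exp(⟨v, X⟩) ≤ exp(‖v‖² σ²/(2d))` for all `v ∈ ℝ^d`, then for every `t ≥ 0`,
`Pr(‖X‖ ≥ t) ≤ 4^d · exp(−d t²/(8σ²))`. -/
theorem subGaussian_norm_tail_with_covering
    (d : ℕ) (Ω : Type) [MeasureSpace Ω] [IsProbabilityMeasure (ℙ : Measure Ω)]
    (X : Ω → EuclideanSpace ℝ (Fin d)) (σ : ℝ) (hσ : 0 < σ)
    (hXmeas : Measurable X) (hXint : Integrable X)
    (hmean : (∫ ω, X ω) = 0)
    (hmgf_int : ∀ v : EuclideanSpace ℝ (Fin d), Integrable (fun ω => Real.exp ⟪v, X ω⟫))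
    (hmgf : ∀ v : EuclideanSpace ℝ (Fin d),
      (∫ ω, Real.exp ⟪v, X ω⟫) ≤ Real.exp (‖v‖ ^ 2 * σ ^ 2 / (2 * d))) :
    ∀ t : ℝ, 0 ≤ t →
      ℙ {ω | t ≤ ‖X ω‖} ≤
        ENNReal.ofReal ((4 : ℝ) ^ d * Real.exp (-(d * t ^ 2) / (8 * σ ^ 2))) :=
  subGaussian_norm_tail_with_covering_general d Ω X σ hmgf_int hmgf
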